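/- The function φ_→ is complex-differentiable on the open set B(0,1)∖[0,∞). -/

import Mathlib

/-!
Since `t ≥ 0` is real, `(-(t z))^{-1/2} = t^{-1/2} (-z)^{-1/2}`, so
`φ_→(z) = 2 z (-z)^{-1/2} ∫_0^1 t^{-1/2} (1 - t z)^{1/2} dt`. The singular weight `t^{-1/2}` no
longer depends on `z`, and `z ↦ (1 - t z)^{1/2}` is holomorphic on the unit ball with a
derivative that is jointly continuous in `(z, t)`, hence locally bounded; differentiation under
the integral sign, dominated by a multiple of `|t^{-1/2}|`, does the rest.
-/

open Complex Metric

/-- `φ_→(z) = 2z·∫_0^1 (1−tz)^{1/2}·(−tz)^{−1/2} dt`, the integral of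
`2(1−s)^{1/2}(−s)^{−1/2}` over the straight segment from `0` to `z` (principal powers). -/
noncomputable def phiRight (z : ℂ) : ℂ :=
  2 * z *
    ∫ t in (0:ℝ)..1, (1 - (t : ℂ) * z) ^ ((1 : ℂ)/2) * (-((t : ℂ) * z)) ^ (-((1 : ℂ)/2))

open MeasureTheory Set Function intervalIntegral
open scoped Interval

section ParametricIntegral

variable {𝕜 E : Type*} [RCLike 𝕜] [NormedAddCommGroup E] [NormedSpace ℝ E] [NormedSpace 𝕜 E]
  {a b : ℝ}

theorem differentiableOn_intervalIntegral_smul {U : Set 𝕜} (hU : IsOpen U) {w : ℝ → 𝕜}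
    (hw : IntervalIntegrable w volume a b) {f f' : 𝕜 → ℝ → E}
    (hf : ContinuousOn (uncurry f) (U ×ˢ [[a, b]]))
    (hf' : ContinuousOn (uncurry f') (U ×ˢ [[a, b]]))
    (hderiv : ∀ z ∈ U, ∀ t ∈ [[a, b]], HasDerivAt (f · t) (f' z t) z) :
    DifferentiableOn 𝕜 (fun z => ∫ t in a..b, w t • f z t) U := by
  intro z₀ hz₀
  obtain ⟨ε, hε, hεU⟩ := nhds_basis_closedBall.mem_iff.1 (hU.mem_nhds hz₀)
  obtain ⟨C, hC⟩ := ((isCompact_closedBall z₀ ε).prod isCompact_uIcc).exists_bound_of_continuousOn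
    (hf'.mono (prod_mono hεU subset_rfl))
  have hint : ∀ z ∈ U, IntervalIntegrable (fun t => w t • f z t) volume a b := fun z hz =>
    hw.smul_continuousOn (hf.uncurry_left z hz)
  refine (hasDerivAt_integral_of_dominated_loc_of_deriv_le (F := fun z t => w t • f z t)
    (F' := fun z t => w t • f' z t) (bound := fun t => ‖w t‖ * C)
    (ball_mem_nhds z₀ hε) ?_ (hint z₀ hz₀)
    (hw.smul_continuousOn (hf'.uncurry_left z₀ hz₀)).def'.aestronglyMeasurable ?_
    (hw.norm.mul_const C) ?_).2.differentiableAt.differentiableWithinAt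
  · filter_upwards [hU.mem_nhds hz₀] with z hz using (hint z hz).def'.aestronglyMeasurable
  · refine .of_forall fun t ht z hz => ?_
    rw [norm_smul]
    exact mul_le_mul_of_nonneg_left
      (hC (z, t) ⟨ball_subset_closedBall hz, uIoc_subset_uIcc ht⟩) (norm_nonneg _)
  · exact .of_forall fun t ht z hz =>
      (hderiv z (hεU (ball_subset_closedBall hz)) t (uIoc_subset_uIcc ht)).const_smul (w t)

end ParametricIntegral

theorem Complex.ofReal_mul_cpow_of_nonneg {t : ℝ} (ht : 0 ≤ t) (w r : ℂ) :
    ((t : ℂ) * w) ^ r = (t : ℂ) ^ r * w ^ r := by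
  rcases eq_or_ne r 0 with rfl | hr
  · simp
  rcases ht.eq_or_lt with rfl | ht
  · simp [zero_cpow hr]
  rcases eq_or_ne w 0 with rfl | hw
  · simp [zero_cpow hr]
  have ht' : (t : ℂ) ≠ 0 := ofReal_ne_zero.2 ht.ne'
  rw [cpow_def_of_ne_zero (mul_ne_zero ht' hw), log_ofReal_mul ht hw, ofReal_log ht.le,
    add_mul, exp_add, ← cpow_def_of_ne_zero ht', ← cpow_def_of_ne_zero hw]

theorem Complex.one_sub_ofReal_mul_mem_slitPlane {z : ℂ} (hz : ‖z‖ < 1) {t : ℝ} (ht : |t| ≤ 1) :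
    1 - (t : ℂ) * z ∈ slitPlane := by
  rw [sub_eq_add_neg]
  refine mem_slitPlane_of_norm_lt_one ?_
  rw [norm_neg, norm_mul, norm_real, Real.norm_eq_abs]
  exact (mul_le_of_le_one_left (norm_nonneg z) ht).trans_lt hz

theorem Complex.neg_mem_slitPlane_of_notMem_ofReal_image_Ici {z : ℂ}
    (hz : z ∉ ofReal '' Ici 0) : -z ∈ slitPlane := by
  rw [mem_slitPlane_iff, neg_re, neg_im, neg_pos, ne_eq, neg_eq_zero]
  by_contra! h
  exact hz ⟨z.re, h.1, Complex.ext rfl (by simp [h.2])⟩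

theorem differentiableOn_integral_cpow_mul_one_sub_mul_cpow {a : ℂ} (ha : -1 < a.re) (c : ℂ) :
    DifferentiableOn ℂ (fun z => ∫ t in (0:ℝ)..1, (t : ℂ) ^ a * (1 - (t : ℂ) * z) ^ c)
      (ball 0 1) := by
  have hslit : ∀ p ∈ ball (0 : ℂ) 1 ×ˢ [[(0:ℝ), 1]], 1 - (p.2 : ℂ) * p.1 ∈ slitPlane := by
    rintro ⟨z, t⟩ ⟨hz, ht⟩
    rw [uIcc_of_le zero_le_one] at ht
    exact one_sub_ofReal_mul_mem_slitPlane (mem_ball_zero_iff.1 hz)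
      (abs_le.2 ⟨by linarith [ht.1], ht.2⟩)
  have hcont : ∀ e : ℂ, ContinuousOn (fun p : ℂ × ℝ => (1 - (p.2 : ℂ) * p.1) ^ e)
      (ball 0 1 ×ˢ [[(0:ℝ), 1]]) := fun e p hp =>
    ((by fun_prop : Continuous fun p : ℂ × ℝ => 1 - (p.2 : ℂ) * p.1).continuousAt.cpow
      continuousAt_const (hslit p hp)).continuousWithinAt
  have hderiv : ∀ z ∈ ball (0 : ℂ) 1, ∀ t ∈ [[(0:ℝ), 1]],
      HasDerivAt (fun z => (1 - (t : ℂ) * z) ^ c) (c * (1 - (t : ℂ) * z) ^ (c - 1) * -(t : ℂ)) z :=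
    fun z hz t ht => by
    have hlin : HasDerivAt (fun z : ℂ => 1 - (t : ℂ) * z) (-(t : ℂ)) z := by
      simpa using ((hasDerivAt_id z).const_mul (t : ℂ)).const_sub 1
    exact hlin.cpow_const (hslit (z, t) ⟨hz, ht⟩)
  simpa only [smul_eq_mul] using differentiableOn_intervalIntegral_smul
    (f := fun z t => (1 - (t : ℂ) * z) ^ c)
    (f' := fun z t => c * (1 - (t : ℂ) * z) ^ (c - 1) * -(t : ℂ))
    isOpen_ball (intervalIntegrable_cpow' ha) (hcont c)
    ((continuousOn_const.mul (hcont (c - 1))).mul (by fun_prop)) hderiv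

theorem phiRight_eq_mul_integral (z : ℂ) :
    phiRight z = 2 * z * (-z) ^ (-((1 : ℂ)/2)) *
      ∫ t in (0:ℝ)..1, (t : ℂ) ^ (-((1 : ℂ)/2)) * (1 - (t : ℂ) * z) ^ ((1 : ℂ)/2) := by
  rw [phiRight, mul_assoc _ ((-z) ^ _),
    ← intervalIntegral.integral_const_mul ((-z) ^ (-((1 : ℂ)/2)))]
  congr 1
  refine integral_congr fun t ht => ?_
  rw [uIcc_of_le zero_le_one] at ht
  rw [← mul_neg, ofReal_mul_cpow_of_nonneg ht.1]
  ring

/-- `φ_→` is complex-differentiable on `B(0,1)∖[0,∞)`. -/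
theorem stmt_15 :
    DifferentiableOn ℂ phiRight (ball (0 : ℂ) 1 \ (Complex.ofReal '' Set.Ici 0)) := by
  rw [show phiRight = _ from funext phiRight_eq_mul_integral]
  refine ((differentiableOn_id.const_mul 2).mul fun z hz => ?_).mul
    ((differentiableOn_integral_cpow_mul_one_sub_mul_cpow (by norm_num) _).mono sdiff_subset)
  exact (differentiableAt_id.neg.cpow_const
    (neg_mem_slitPlane_of_notMem_ofReal_image_Ici hz.2)).differentiableWithinAt
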